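/- arXiv:2505.23316 — 2 statements merged into one kernel-verified Lean document; each statement's English description precedes it below -/
import Mathlib

section
/- (Corollary B.2) Let Z be a nonempty finite type, μ ∈ Δ with μ(z) > 0 for all z ∈ Z, π_ref ∈ Δ, μ̂ a probability distribution on Z, ŝ : Z → ℝ, β > 0, and suppose the set N := {z ∈ Z : ŝ(z) < 0} is nonempty. Define α₀ := max_{z ∈ N} [4·μ̂(z)·(−ŝ(z)) / (μ(z)·min_{z' ∈ Z} μ(z'))]. Then for every α > α₀, the PRO loss L_α(π) := −β·∑_z μ̂(z)·ŝ(z)·log π(z) + (α/2)·∑_{z1, z2} μ(z1)·μ(z2)·KLB(σ(r_π(z1) − r_π(z2))), with r_π(z) := β·log(π(z)/π_ref(z)), attains a minimum on Δ. -/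
/-!
Since `KLB (σ t) = log (cosh (t / 2)) ≥ max 0 (t / 2 - log 2)`, comparing every `z` with a
coordinate `a` of mass `π a ≥ 1 / |Z|` bounds the pairwise sum from below by
`(β · min μ / 2) · ∑ μ z · (-log π z)` up to an additive constant. Hence
`L_α π ≥ ∑ c z · (-log π z) - D` with `c z = β (μ̂ z ŝ z + α · min μ · μ z / 4)`, and `α > α₀`
is what makes every `c z` positive. So sublevel sets of `L_α` keep a fixed distance from
the boundary of the simplex, hence lie in a compact subset of `Δ`, where the continuous `L_α`
attains its minimum.
-/

noncomputable def sig (t : ℝ) : ℝ := 1 / (1 + Real.exp (-t))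

noncomputable def KLB (q : ℝ) : ℝ :=
  (1/2) * Real.log ((1/2) / q) + (1/2) * Real.log ((1/2) / (1 - q))

open Finset
open Real (log exp cosh)

lemma KLB_sig (t : ℝ) : KLB (sig t) = log (cosh (t / 2)) := by
  have hexp : exp t = exp (t / 2) ^ 2 := by rw [← Real.exp_nat_mul]; ring_nf
  have h₁ : (1 / 2 : ℝ) / sig t = exp (-(t / 2)) * cosh (t / 2) := by
    rw [sig, Real.cosh_eq, Real.exp_neg, Real.exp_neg, hexp]
    field_simp
  have h₂ : (1 / 2 : ℝ) / (1 - sig t) = exp (t / 2) * cosh (t / 2) := by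
    rw [sig, Real.cosh_eq, Real.exp_neg, Real.exp_neg, hexp]
    field_simp
    ring
  have hcosh := (Real.cosh_pos (t / 2)).ne'
  rw [KLB, h₁, h₂, Real.log_mul (Real.exp_pos _).ne' hcosh,
    Real.log_mul (Real.exp_pos _).ne' hcosh, Real.log_exp, Real.log_exp]
  ring

lemma KLB_sig_nonneg (t : ℝ) : 0 ≤ KLB (sig t) := by
  rw [KLB_sig]
  exact Real.log_nonneg (Real.one_le_cosh _)

lemma half_sub_log_two_le_KLB_sig (t : ℝ) : t / 2 - log 2 ≤ KLB (sig t) := by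
  have h : exp (t / 2) / 2 ≤ cosh (t / 2) := by
    rw [Real.cosh_eq]
    linarith [Real.exp_pos (-(t / 2))]
  rw [KLB_sig]
  calc t / 2 - log 2 = log (exp (t / 2) / 2) := by
        rw [Real.log_div (Real.exp_pos _).ne' two_ne_zero, Real.log_exp]
    _ ≤ log (cosh (t / 2)) := Real.log_le_log (by positivity) h

lemma sum_le_sum_sum_KLB_sig {Z : Type*} [Fintype Z] {μ : Z → ℝ} {m : ℝ} (hm0 : 0 ≤ m)
    (hm : ∀ z, m ≤ μ z) (r : Z → ℝ) (a : Z) :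
    ∑ z, m * μ z * ((r a - r z) / 2 - log 2) ≤
      ∑ z1, ∑ z2, μ z1 * μ z2 * KLB (sig (r z1 - r z2)) := by
  have hμ z : 0 ≤ μ z := hm0.trans (hm z)
  calc ∑ z, m * μ z * ((r a - r z) / 2 - log 2)
      ≤ ∑ z, μ a * μ z * KLB (sig (r a - r z)) := by
        refine sum_le_sum fun z _ => ?_
        calc m * μ z * ((r a - r z) / 2 - log 2)
            ≤ m * μ z * KLB (sig (r a - r z)) :=
              mul_le_mul_of_nonneg_left (half_sub_log_two_le_KLB_sig _) (mul_nonneg hm0 (hμ z))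
          _ ≤ μ a * μ z * KLB (sig (r a - r z)) := by
              gcongr
              · exact KLB_sig_nonneg _
              · exact hμ z
              · exact hm a
    _ ≤ ∑ z1, ∑ z2, μ z1 * μ z2 * KLB (sig (r z1 - r z2)) :=
        single_le_sum (f := fun z1 => ∑ z2, μ z1 * μ z2 * KLB (sig (r z1 - r z2)))
          (fun z1 _ => sum_nonneg fun z2 _ =>
            mul_nonneg (mul_nonneg (hμ z1) (hμ z2)) (KLB_sig_nonneg _))
          (mem_univ a)

def openSimplex (Z : Type*) [Fintype Z] : Set (Z → ℝ) :=
  {p | (∀ z, 0 < p z) ∧ ∑ z, p z = 1}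

namespace openSimplex

variable {Z : Type*} [Fintype Z] {p : Z → ℝ}

lemma le_one (hp : p ∈ openSimplex Z) (z : Z) : p z ≤ 1 :=
  hp.2 ▸ single_le_sum (fun i _ => (hp.1 i).le) (mem_univ z)

lemma neg_log_nonneg (hp : p ∈ openSimplex Z) (z : Z) : 0 ≤ -log (p z) :=
  neg_nonneg.mpr (Real.log_nonpos (hp.1 z).le (le_one hp z))

lemma exists_inv_card_le [Nonempty Z] (hp : p ∈ openSimplex Z) :
    ∃ a, (Fintype.card Z : ℝ)⁻¹ ≤ p a := by
  obtain ⟨a, -, ha⟩ := exists_le_of_sum_le (f := fun _ => (Fintype.card Z : ℝ)⁻¹) (g := p)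
    univ_nonempty (by simp [hp.2])
  exact ⟨a, ha⟩

lemma nonempty [Nonempty Z] : (openSimplex Z).Nonempty :=
  ⟨fun _ => (Fintype.card Z : ℝ)⁻¹, fun _ => by positivity, by simp⟩

end openSimplex

section Existence

variable {Z : Type*} [Fintype Z] {L : (Z → ℝ) → ℝ}

theorem exists_isMinOn_openSimplex [Nonempty Z] (hL : ContinuousOn L (openSimplex Z))
    (hsub : ∀ M, ∃ ε > 0, ∀ p ∈ openSimplex Z, L p ≤ M → ∀ z, ε ≤ p z) :
    ∃ p ∈ openSimplex Z, IsMinOn L (openSimplex Z) p := by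
  obtain ⟨p₀, hp₀⟩ := openSimplex.nonempty (Z := Z)
  obtain ⟨ε, hε, hεsub⟩ := hsub (L p₀)
  set K := (⋂ z, {p : Z → ℝ | ε ≤ p z}) ∩ {p | ∑ z, p z = 1}
  have hKΔ : K ⊆ openSimplex Z := fun p hp =>
    ⟨fun z => hε.trans_le (Set.mem_iInter.mp hp.1 z), hp.2⟩
  have hK : IsCompact K := by
    refine (isCompact_stdSimplex ℝ Z).of_isClosed_subset ?_ fun p hp => ?_
    · exact (isClosed_iInter fun z => isClosed_le continuous_const (continuous_apply z)).inter
        (isClosed_eq (by fun_prop) continuous_const)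
    · exact ⟨fun z => ((hKΔ hp).1 z).le, hp.2⟩
  have hp₀K : p₀ ∈ K := ⟨Set.mem_iInter.mpr (hεsub p₀ hp₀ le_rfl), hp₀.2⟩
  obtain ⟨p, hpK, hmin⟩ := hK.exists_isMinOn ⟨p₀, hp₀K⟩ (hL.mono hKΔ)
  refine ⟨p, hKΔ hpK, fun q hq => ?_⟩
  by_cases hqM : L q ≤ L p₀
  · exact hmin ⟨Set.mem_iInter.mpr (hεsub q hq hqM), hq.2⟩
  · exact (hmin hp₀K).trans (not_le.mp hqM).le

lemma sublevel_bounded_away_of_neg_log_le {c D : ℝ} (hc : 0 < c)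
    (hL : ∀ p ∈ openSimplex Z, ∀ w, c * (-log (p w)) - D ≤ L p) (M : ℝ) :
    ∃ ε > 0, ∀ p ∈ openSimplex Z, L p ≤ M → ∀ z, ε ≤ p z := by
  refine ⟨exp (-((M + D) / c)), Real.exp_pos _, fun p hp hpM z => ?_⟩
  rw [← Real.le_log_iff_exp_le (hp.1 z), neg_le, le_div_iff₀ hc]
  linarith [hL p hp z]

end Existence

section Threshold

variable {Z : Type*} (μ μhat shat : Z → ℝ)

-- With `m = min μ` this is the paper's `α₀`.
noncomputable def proThreshold (m : ℝ) : ℝ :=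
  ⨆ z : {z : Z // shat z < 0}, 4 * μhat z.1 * (-shat z.1) / (μ z.1 * m)

variable {μ μhat shat}

lemma proThreshold_nonneg {m : ℝ} (hμ : ∀ z, 0 < μ z) (hm : 0 < m) (hμhat : ∀ z, 0 ≤ μhat z) :
    0 ≤ proThreshold μ μhat shat m :=
  Real.iSup_nonneg fun z =>
    div_nonneg (mul_nonneg (mul_nonneg zero_le_four (hμhat z)) (neg_nonneg.mpr z.2.le))
      (mul_pos (hμ z) hm).le

lemma mul_add_pos_of_proThreshold_lt [Finite Z] {m : ℝ} (hμ : ∀ z, 0 < μ z) (hm : 0 < m)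
    (hμhat : ∀ z, 0 ≤ μhat z) (hα : proThreshold μ μhat shat m < α) (z : Z) :
    0 < μhat z * shat z + α * m * μ z / 4 := by
  rcases lt_or_ge (shat z) 0 with hz | hz
  · have h := (le_ciSup (Set.finite_range _).bddAbove (⟨z, hz⟩ : {z // shat z < 0})).trans_lt hα
    rw [div_lt_iff₀ (mul_pos (hμ z) hm)] at h
    linarith
  · have hα0 := (proThreshold_nonneg hμ hm hμhat).trans_lt hα
    have := mul_nonneg (hμhat z) hz
    have := hμ z
    positivity

end Threshold

section ProLoss

variable {Z : Type*} [Fintype Z] (μ πref μhat shat : Z → ℝ) (β α : ℝ)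

noncomputable def proLoss (p : Z → ℝ) : ℝ :=
  -β * (∑ z, μhat z * shat z * log (p z))
    + (α / 2) * ∑ z1, ∑ z2, μ z1 * μ z2 *
        KLB (sig (β * log (p z1 / πref z1) - β * log (p z2 / πref z2)))

variable {μ πref μhat shat β α}

lemma continuousOn_proLoss (href : ∀ z, πref z ≠ 0) :
    ContinuousOn (proLoss μ πref μhat shat β α) (openSimplex Z) := by
  have hp0 : ∀ p ∈ openSimplex Z, ∀ z, p z ≠ 0 := fun p hp z => (hp.1 z).ne'
  have hcosh (x : ℝ) : cosh x ≠ 0 := (Real.cosh_pos x).ne'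
  unfold proLoss
  simp only [KLB_sig]
  refine .add (continuousOn_const.mul (continuousOn_finsetSum _ fun z _ => ?_))
    (continuousOn_const.mul (continuousOn_finsetSum _ fun z1 _ =>
      continuousOn_finsetSum _ fun z2 _ => ?_)) <;>
  fun_prop (disch := intros; simp [*])

lemma proLoss_ge [Nonempty Z] {m : ℝ} (hm0 : 0 ≤ m) (hm : ∀ z, m ≤ μ z)
    (href : ∀ z, πref z ≠ 0) (hβ : 0 ≤ β) (hα : 0 ≤ α) :
    ∃ D, ∀ p ∈ openSimplex Z,
      ∑ z, β * (μhat z * shat z + α * m * μ z / 4) * (-log (p z)) - D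
        ≤ proLoss μ πref μhat shat β α p := by
  obtain ⟨C, hC⟩ : ∃ C, ∀ a z, β * (log (πref a) - log (πref z)) ≤ C := by
    obtain ⟨C, hC⟩ := (Set.finite_range
      fun q : Z × Z => β * (log (πref q.1) - log (πref q.2))).bddAbove
    exact ⟨C, fun a z => hC ⟨(a, z), rfl⟩⟩
  set C' := β * log (Fintype.card Z) + C
  refine ⟨α / 2 * ∑ z, m * μ z * (C' / 2 + log 2), fun p hp => ?_⟩
  obtain ⟨a, ha⟩ := openSimplex.exists_inv_card_le hp
  set r : Z → ℝ := fun z => β * log (p z / πref z)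
  have hgap z : β * (-log (p z)) - C' ≤ r a - r z := by
    have hlog : -log (Fintype.card Z) ≤ log (p a) := by
      rw [← Real.log_inv]
      exact Real.log_le_log (by positivity) ha
    simp only [r, Real.log_div (hp.1 _).ne' (href _)]
    linarith [hC a z, mul_le_mul_of_nonneg_left hlog hβ]
  have hpair : ∑ z, m * μ z * ((β * (-log (p z)) - C') / 2 - log 2)
      ≤ ∑ z1, ∑ z2, μ z1 * μ z2 * KLB (sig (r z1 - r z2)) := by
    refine le_trans (sum_le_sum fun z _ => ?_) (sum_le_sum_sum_KLB_sig hm0 hm r a)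
    have := hgap z
    exact mul_le_mul_of_nonneg_left (by linarith) (mul_nonneg hm0 (hm0.trans (hm z)))
  calc ∑ z, β * (μhat z * shat z + α * m * μ z / 4) * (-log (p z))
        - α / 2 * ∑ z, m * μ z * (C' / 2 + log 2)
      = -β * (∑ z, μhat z * shat z * log (p z))
          + α / 2 * ∑ z, m * μ z * ((β * (-log (p z)) - C') / 2 - log 2) := by
        simp only [mul_sum, ← sum_sub_distrib, ← sum_add_distrib]
        exact sum_congr rfl fun z _ => by ring
    _ ≤ proLoss μ πref μhat shat β α p := by
        unfold proLoss
        gcongr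

lemma proLoss_coercive [Nonempty Z] {m : ℝ} (hm0 : 0 ≤ m) (hm : ∀ z, m ≤ μ z)
    (href : ∀ z, πref z ≠ 0) (hβ : 0 < β) (hα : 0 ≤ α)
    (hcoef : ∀ z, 0 < μhat z * shat z + α * m * μ z / 4) :
    ∃ c > 0, ∃ D, ∀ p ∈ openSimplex Z, ∀ w,
      c * (-log (p w)) - D ≤ proLoss μ πref μhat shat β α p := by
  set c : Z → ℝ := fun z => β * (μhat z * shat z + α * m * μ z / 4)
  have hc z : 0 < c z := mul_pos hβ (hcoef z)
  obtain ⟨D, hD⟩ := proLoss_ge hm0 hm href hβ.le hα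
  obtain ⟨z₀, hz₀⟩ := Finite.exists_min c
  refine ⟨c z₀, hc z₀, D, fun p hp w => le_trans ?_ (hD p hp)⟩
  gcongr
  calc c z₀ * (-log (p w)) ≤ c w * (-log (p w)) := by
        gcongr
        · exact openSimplex.neg_log_nonneg hp w
        · exact hz₀ w
    _ ≤ ∑ z, c z * (-log (p z)) :=
        single_le_sum (fun z _ => mul_nonneg (hc z).le (openSimplex.neg_log_nonneg hp z))
          (mem_univ w)

end ProLoss

theorem stmt_11_general {Z : Type*} [Fintype Z] [Nonempty Z]
    (μ : Z → ℝ) (hμ : ∀ z, 0 < μ z)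
    (πref : Z → ℝ) (href : ∀ z, 0 < πref z)
    (μhat : Z → ℝ) (hμhat0 : ∀ z, 0 ≤ μhat z)
    (shat : Z → ℝ) (β : ℝ) (hβ : 0 < β)
    (α₀ : ℝ)
    (hα₀ : α₀ = ⨆ z : {z : Z // shat z < 0},
        4 * μhat z.1 * (-shat z.1) / (μ z.1 * ⨅ z' : Z, μ z'))
    (α : ℝ) (hα : α₀ < α)
    (L : (Z → ℝ) → ℝ)
    (hL : ∀ π : Z → ℝ, L π =
      -β * (∑ z, μhat z * shat z * Real.log (π z))
        + (α/2) * ∑ z1, ∑ z2, μ z1 * μ z2 *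
            KLB (sig (β * Real.log (π z1 / πref z1) - β * Real.log (π z2 / πref z2)))) :
    ∃ πstar : Z → ℝ, (∀ z, 0 < πstar z) ∧ (∑ z, πstar z = 1) ∧
      ∀ π : Z → ℝ, (∀ z, 0 < π z) → (∑ z, π z = 1) → L πstar ≤ L π := by
  obtain ⟨z₀, hz₀⟩ := Finite.exists_min μ
  set m := ⨅ z, μ z
  have hm : ∀ z, m ≤ μ z := ciInf_le (Set.finite_range μ).bddBelow
  have hm0 : 0 < m := (hμ z₀).trans_le (le_ciInf hz₀)
  have hα' : proThreshold μ μhat shat m < α := by rwa [hα₀] at hα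
  have hα0 : 0 ≤ α := ((proThreshold_nonneg hμ hm0 hμhat0).trans_lt hα').le
  have href0 z : πref z ≠ 0 := (href z).ne'
  obtain ⟨c, hc, D, hbound⟩ := proLoss_coercive hm0.le hm href0 hβ hα0
    (mul_add_pos_of_proThreshold_lt hμ hm0 hμhat0 hα')
  obtain ⟨p, hp, hmin⟩ := exists_isMinOn_openSimplex (continuousOn_proLoss href0)
    (sublevel_bounded_away_of_neg_log_le hc hbound)
  obtain rfl : L = proLoss μ πref μhat shat β α := funext hL
  exact ⟨p, hp.1, hp.2, fun π hπ hπ1 => hmin ⟨hπ, hπ1⟩⟩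

theorem stmt_11 {Z : Type*} [Fintype Z] [Nonempty Z]
    (μ : Z → ℝ) (hμ : ∀ z, 0 < μ z) (hμ1 : ∑ z, μ z = 1)
    (πref : Z → ℝ) (href : ∀ z, 0 < πref z) (href1 : ∑ z, πref z = 1)
    (μhat : Z → ℝ) (hμhat0 : ∀ z, 0 ≤ μhat z) (hμhat1 : ∑ z, μhat z = 1)
    (shat : Z → ℝ) (β : ℝ) (hβ : 0 < β)
    (hN : ∃ z, shat z < 0)
    (α₀ : ℝ)
    (hα₀ : α₀ = ⨆ z : {z : Z // shat z < 0},
        4 * μhat z.1 * (-shat z.1) / (μ z.1 * ⨅ z' : Z, μ z'))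
    (α : ℝ) (hα : α₀ < α)
    (L : (Z → ℝ) → ℝ)
    (hL : ∀ π : Z → ℝ, L π =
      -β * (∑ z, μhat z * shat z * Real.log (π z))
        + (α/2) * ∑ z1, ∑ z2, μ z1 * μ z2 *
            KLB (sig (β * Real.log (π z1 / πref z1) - β * Real.log (π z2 / πref z2)))) :
    ∃ πstar : Z → ℝ, (∀ z, 0 < πstar z) ∧ (∑ z, πstar z = 1) ∧
      ∀ π : Z → ℝ, (∀ z, 0 < π z) → (∑ z, π z = 1) → L πstar ≤ L π :=
  stmt_11_general μ hμ πref href μhat hμhat0 shat β hβ α₀ hα₀ α hα L hL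
end

section
/- (Theorem 4.3, equivalence part) Let Z be a nonempty finite type, S ⊆ Z a nonempty proper subset, μ̂ a probability distribution on Z with μ̂(z) > 0 exactly for z ∈ S, p̂ : Z × Z → ℝ with p̂(z1, z2) + p̂(z2, z1) = 1 for all z1, z2 ∈ S, ŝ(z) := ∑_{z'} μ̂(z')·p̂(z, z') − 1/2 for z ∈ S and ŝ(z) := 0 for z ∉ S, 0 < η < 1, ρ a probability distribution on Z supported on Z \ S with ρ(z) > 0 for all z ∉ S, μ̄(z) := η·μ̂(z) for z ∈ S and μ̄(z) := (1 − η)·ρ(z) for z ∉ S, β > 0, and π_ref ∈ Δ. Define, with r_π(z) := β·log(π(z)/π_ref(z)), the PRO loss at α = 1/η²: L_PRO(π) := −β·∑_z μ̂(z)·ŝ(z)·log π(z) + (1/(2η²))·∑_{z1, z2} μ̄(z1)·μ̄(z2)·KLB(σ(r_π(z1) − r_π(z2))), and the PRO-P loss L_PRO-P(π) := −(1/η²)·∑_{z1, z2} μ̄(z1)·μ̄(z2)·p̄(z1, z2)·log σ(r_π(z1) − r_π(z2)), where p̄(z1, z2) := p̂(z1, z2) if z1 ∈ S and z2 ∈ S,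 and p̄(z1, z2) := 1/2 otherwise. Then there exists a real constant c, independent of π, such that L_PRO(π) = L_PRO-P(π) + c for every π ∈ Δ; in particular the two losses share the same gradient. -/
lemma sig_pos (t : ℝ) : 0 < sig t := by
  unfold sig; positivity

lemma one_sub_sig (t : ℝ) : 1 - sig t = sig (-t) := by
  unfold sig
  rw [neg_neg, Real.exp_neg]
  have h1 : (0:ℝ) < Real.exp t := Real.exp_pos t
  have h2 : (0:ℝ) < 1 + (Real.exp t)⁻¹ := by positivity
  have h3 : (0:ℝ) < 1 + Real.exp t := by positivity
  field_simp
  ring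

lemma sig_div (t : ℝ) : sig t / sig (-t) = Real.exp t := by
  unfold sig
  rw [neg_neg, Real.exp_neg]
  have h1 : (0:ℝ) < Real.exp t := Real.exp_pos t
  have h2 : (0:ℝ) < 1 + (Real.exp t)⁻¹ := by positivity
  have h3 : (0:ℝ) < 1 + Real.exp t := by positivity
  field_simp
  ring

lemma log_sig_sub (t : ℝ) : Real.log (sig t) - Real.log (sig (-t)) = t := by
  rw [← Real.log_div (ne_of_gt (sig_pos t)) (ne_of_gt (sig_pos (-t))), sig_div, Real.log_exp]

lemma KLB_sig_s13 (t : ℝ) :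
    KLB (sig t) = Real.log (1/2) - (1/2) * (Real.log (sig t) + Real.log (sig (-t))) := by
  unfold KLB
  rw [one_sub_sig, Real.log_div (by norm_num) (ne_of_gt (sig_pos t)),
      Real.log_div (by norm_num) (ne_of_gt (sig_pos (-t)))]
  ring

theorem stmt_13 {Z : Type*} [Fintype Z] [Nonempty Z] [DecidableEq Z]
    (S : Finset Z) (hSne : S.Nonempty) (hSproper : S ≠ Finset.univ)
    (μhat : Z → ℝ) (hμhat0 : ∀ z, 0 ≤ μhat z) (hμhat1 : ∑ z, μhat z = 1)
    (hμhatS : ∀ z, 0 < μhat z ↔ z ∈ S)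
    (phat : Z → Z → ℝ) (hphat : ∀ z1 ∈ S, ∀ z2 ∈ S, phat z1 z2 + phat z2 z1 = 1)
    (shat : Z → ℝ)
    (hshatS : ∀ z ∈ S, shat z = (∑ z', μhat z' * phat z z') - 1/2)
    (hshatNS : ∀ z ∉ S, shat z = 0)
    (η : ℝ) (hη0 : 0 < η) (hη1 : η < 1)
    (ρ : Z → ℝ) (hρS : ∀ z ∈ S, ρ z = 0) (hρNS : ∀ z ∉ S, 0 < ρ z)
    (hρ1 : ∑ z, ρ z = 1)
    (μbar : Z → ℝ)
    (hμbarS : ∀ z ∈ S, μbar z = η * μhat z)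
    (hμbarNS : ∀ z ∉ S, μbar z = (1 - η) * ρ z)
    (β : ℝ) (hβ : 0 < β)
    (πref : Z → ℝ) (href : ∀ z, 0 < πref z) (href1 : ∑ z, πref z = 1)
    (pbar : Z → Z → ℝ)
    (hpbar : ∀ z1 z2, pbar z1 z2 = if z1 ∈ S ∧ z2 ∈ S then phat z1 z2 else 1/2)
    (LPRO LPROP : (Z → ℝ) → ℝ)
    (hLPRO : ∀ π : Z → ℝ, LPRO π =
      -β * (∑ z, μhat z * shat z * Real.log (π z))
        + (1/(2*η^2)) * ∑ z1, ∑ z2, μbar z1 * μbar z2 *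
            KLB (sig (β * Real.log (π z1 / πref z1) - β * Real.log (π z2 / πref z2))))
    (hLPROP : ∀ π : Z → ℝ, LPROP π =
      -(1/η^2) * ∑ z1, ∑ z2, μbar z1 * μbar z2 * pbar z1 z2 *
          Real.log (sig (β * Real.log (π z1 / πref z1) - β * Real.log (π z2 / πref z2)))) :
    ∃ c : ℝ, ∀ π : Z → ℝ, (∀ z, 0 < π z) → (∑ z, π z = 1) →
      LPRO π = LPROP π + c := by
  classical
  refine ⟨Real.log (1/2) * (∑ z, μbar z)^2 / (2*η^2)
    - β * ∑ z, μhat z * shat z * Real.log (πref z), ?_⟩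
  intro π hπ hπ1
  have hμ0 : ∀ z ∉ S, μhat z = 0 := by
    intro z hz
    have h1 := hμhat0 z
    have h2 : ¬ 0 < μhat z := fun h => hz ((hμhatS z).mp h)
    linarith
  rw [hLPRO π, hLPROP π]
  set r : Z → ℝ := fun z => β * Real.log (π z / πref z) with hr
  simp only [show ∀ z1 z2 : Z, β * Real.log (π z1 / πref z1) - β * Real.log (π z2 / πref z2)
      = r z1 - r z2 from fun _ _ => rfl]
  set M := ∑ z, μbar z with hM
  set G := ∑ z, μhat z * shat z * Real.log (π z) with hG
  set H := ∑ z, μhat z * shat z * Real.log (πref z) with hH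
  set A := ∑ z1, ∑ z2, μbar z1 * μbar z2 * Real.log (sig (r z1 - r z2)) with hA
  -- antisymmetry of the centered preference coefficients
  have hanti : ∀ z1 z2 : Z, μbar z2 * μbar z1 * (pbar z2 z1 - 1/2)
      = -(μbar z1 * μbar z2 * (pbar z1 z2 - 1/2)) := by
    intro z1 z2
    rw [hpbar z1 z2, hpbar z2 z1]
    by_cases h1 : z1 ∈ S <;> by_cases h2 : z2 ∈ S
    · rw [if_pos ⟨h2, h1⟩, if_pos ⟨h1, h2⟩]
      have hp : phat z2 z1 - 1/2 = -(phat z1 z2 - 1/2) := by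
        have := hphat z1 h1 z2 h2; linarith
      rw [hp]; ring
    · rw [if_neg (by tauto), if_neg (by tauto)]; ring
    · rw [if_neg (by tauto), if_neg (by tauto)]; ring
    · rw [if_neg (by tauto), if_neg (by tauto)]; ring
  -- Step 1: the KLB double sum
  have f1 : ∑ z1, ∑ z2, μbar z1 * μbar z2 * KLB (sig (r z1 - r z2))
      = Real.log (1/2) * M^2 - A := by
    have step : ∀ z1 z2 : Z, μbar z1 * μbar z2 * KLB (sig (r z1 - r z2))
        = μbar z1 * (μbar z2 * Real.log (1/2))
          - (1/2) * (μbar z1 * μbar z2 * Real.log (sig (r z1 - r z2)))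
          - (1/2) * (μbar z1 * μbar z2 * Real.log (sig (r z2 - r z1))) := by
      intro z1 z2
      rw [KLB_sig_s13, neg_sub]
      ring
    simp only [step, Finset.sum_sub_distrib, ← Finset.mul_sum]
    have hswap : ∑ z1, ∑ z2, μbar z1 * μbar z2 * Real.log (sig (r z2 - r z1))
        = ∑ z1, ∑ z2, μbar z1 * μbar z2 * Real.log (sig (r z1 - r z2)) := by
      rw [Finset.sum_comm]
      exact Finset.sum_congr rfl fun a _ => Finset.sum_congr rfl fun b _ => by ring
    rw [hswap, ← hA, ← Finset.sum_mul, ← hM, ← Finset.sum_mul, ← hM]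
    ring
  -- Step 2: identification of the centered term
  have hLsub : ∀ z1 z2 : Z, Real.log (sig (r z1 - r z2)) - Real.log (sig (r z2 - r z1))
      = r z1 - r z2 := by
    intro z1 z2
    have := log_sig_sub (r z1 - r z2)
    rwa [neg_sub] at this
  have h2T : 2 * (∑ z1, ∑ z2, μbar z1 * μbar z2 * (pbar z1 z2 - 1/2) * Real.log (sig (r z1 - r z2)))
      = ∑ z1, ∑ z2, μbar z1 * μbar z2 * (pbar z1 z2 - 1/2) * (r z1 - r z2) := by
    have hTswap : (∑ z1, ∑ z2, μbar z1 * μbar z2 * (pbar z1 z2 - 1/2) * Real.log (sig (r z1 - r z2)))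
        = ∑ z1, ∑ z2, μbar z2 * μbar z1 * (pbar z2 z1 - 1/2) * Real.log (sig (r z2 - r z1)) := by
      rw [Finset.sum_comm]
    calc 2 * (∑ z1, ∑ z2, μbar z1 * μbar z2 * (pbar z1 z2 - 1/2) * Real.log (sig (r z1 - r z2)))
        = (∑ z1, ∑ z2, μbar z1 * μbar z2 * (pbar z1 z2 - 1/2) * Real.log (sig (r z1 - r z2)))
          + ∑ z1, ∑ z2, μbar z2 * μbar z1 * (pbar z2 z1 - 1/2) * Real.log (sig (r z2 - r z1)) := by
          rw [← hTswap]; ring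
      _ = ∑ z1, ∑ z2, μbar z1 * μbar z2 * (pbar z1 z2 - 1/2) * (r z1 - r z2) := by
          rw [← Finset.sum_add_distrib]
          refine Finset.sum_congr rfl fun z1 _ => ?_
          rw [← Finset.sum_add_distrib]
          refine Finset.sum_congr rfl fun z2 _ => ?_
          linear_combination (μbar z1 * μbar z2 * (pbar z1 z2 - 1/2)) * hLsub z1 z2
            + Real.log (sig (r z2 - r z1)) * hanti z1 z2
  have hsplit : ∑ z1, ∑ z2, μbar z1 * μbar z2 * (pbar z1 z2 - 1/2) * (r z1 - r z2)
      = (∑ z1, ∑ z2, μbar z1 * μbar z2 * (pbar z1 z2 - 1/2) * r z1)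
        - ∑ z1, ∑ z2, μbar z1 * μbar z2 * (pbar z1 z2 - 1/2) * r z2 := by
    simp only [mul_sub, Finset.sum_sub_distrib]
  have hswap2 : ∑ z1, ∑ z2, μbar z1 * μbar z2 * (pbar z1 z2 - 1/2) * r z2
      = - ∑ z1, ∑ z2, μbar z1 * μbar z2 * (pbar z1 z2 - 1/2) * r z1 := by
    rw [Finset.sum_comm, ← Finset.sum_neg_distrib]
    refine Finset.sum_congr rfl fun a _ => ?_
    rw [← Finset.sum_neg_distrib]
    refine Finset.sum_congr rfl fun b _ => ?_
    rw [hanti a b]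
    ring
  have hinner : ∀ z1, (∑ z2, μbar z1 * μbar z2 * (pbar z1 z2 - 1/2) * r z1)
      = η^2 * (μhat z1 * shat z1 * r z1) := by
    intro z1
    by_cases h1 : z1 ∈ S
    · have hpt : ∀ z2, μbar z1 * μbar z2 * (pbar z1 z2 - 1/2) * r z1
          = (η * μhat z1 * r z1) * (η * (μhat z2 * phat z1 z2))
            - (η * μhat z1 * r z1) * (η * (μhat z2 * (1/2))) := by
        intro z2
        by_cases h2 : z2 ∈ S
        · rw [hμbarS z1 h1, hμbarS z2 h2, hpbar, if_pos ⟨h1, h2⟩]; ring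
        · rw [hpbar, if_neg (by tauto), hμ0 z2 h2]; ring
      simp only [hpt, Finset.sum_sub_distrib, ← Finset.mul_sum]
      have hsum1 : ∑ z2, μhat z2 * phat z1 z2 = shat z1 + 1/2 := by
        rw [hshatS z1 h1]; ring
      have hsum2 : ∑ z2, μhat z2 * (1/2) = 1/2 := by
        rw [← Finset.sum_mul, hμhat1]; norm_num
      rw [hsum1, hsum2]
      ring
    · have hz : μhat z1 = 0 := hμ0 z1 h1
      have hpt : ∀ z2, μbar z1 * μbar z2 * (pbar z1 z2 - 1/2) * r z1 = 0 := by
        intro z2; rw [hpbar, if_neg (by tauto)]; ring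
      have hzero : ∑ z2, μbar z1 * μbar z2 * (pbar z1 z2 - 1/2) * r z1 = 0 :=
        Finset.sum_eq_zero fun z2 _ => hpt z2
      rw [hzero, hz]; ring
  have hrz : ∀ z, μhat z * shat z * r z
      = β * (μhat z * shat z * Real.log (π z)) - β * (μhat z * shat z * Real.log (πref z)) := by
    intro z
    show μhat z * shat z * (β * Real.log (π z / πref z)) = _
    rw [Real.log_div (hπ z).ne' (href z).ne']
    ring
  have hT : (∑ z1, ∑ z2, μbar z1 * μbar z2 * (pbar z1 z2 - 1/2) * Real.log (sig (r z1 - r z2)))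
      = η^2 * (β * G - β * H) := by
    have e1 : (∑ z1, ∑ z2, μbar z1 * μbar z2 * (pbar z1 z2 - 1/2) * r z1)
        = η^2 * ∑ z, μhat z * shat z * r z := by
      rw [Finset.mul_sum]
      exact Finset.sum_congr rfl fun z1 _ => hinner z1
    have e2 : ∑ z, μhat z * shat z * r z = β * G - β * H := by
      simp only [hrz, Finset.sum_sub_distrib, ← Finset.mul_sum, ← hG, ← hH]
    have := h2T
    rw [hsplit, hswap2, e1, e2] at this
    linarith
  -- Step 3: relate the PRO-P double sum to the centered term
  have hB : (∑ z1, ∑ z2, μbar z1 * μbar z2 * pbar z1 z2 * Real.log (sig (r z1 - r z2)))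
      = (∑ z1, ∑ z2, μbar z1 * μbar z2 * (pbar z1 z2 - 1/2) * Real.log (sig (r z1 - r z2)))
        + (1/2) * A := by
    have step : ∀ z1 z2 : Z, μbar z1 * μbar z2 * pbar z1 z2 * Real.log (sig (r z1 - r z2))
        = μbar z1 * μbar z2 * (pbar z1 z2 - 1/2) * Real.log (sig (r z1 - r z2))
          + (1/2) * (μbar z1 * μbar z2 * Real.log (sig (r z1 - r z2))) := by
      intro z1 z2; ring
    simp only [step, Finset.sum_add_distrib, ← Finset.mul_sum, ← hA]
  rw [f1, hB, hT]
  have hη2 : (η:ℝ)^2 ≠ 0 := by positivity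
  field_simp
  ring
end
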